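/- Let φ : (0,∞) → (0,∞) be convex and strictly decreasing, and let L₁, K₁, ..., Kₙ be star bodies in ℝⁿ. Define the Orlicz multiple dual mixed volume Ṽ_φ(L₁,K₁,...,Kₙ) = (1/n)∫_{S^{n-1}} φ(ρ(K₁,u)/ρ(L₁,u)) ρ(L₁,u)ρ(K₂,u)···ρ(Kₙ,u) dS(u). Then Ṽ_φ(L₁,K₁,...,Kₙ) ≥ Ṽ(L₁,K₂,...,Kₙ) · φ( Ṽ(K₁,K₂,...,Kₙ) / Ṽ(L₁,K₂,...,Kₙ) ). If φ is strictly convex, equality holds if and only if K₁ and L₁ are dilates. -/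

import Mathlib

open MeasureTheory Metric Real Set Finset

/-- The surface (spherical) measure on the unit sphere `S^{n-1} ⊆ ℝⁿ`. -/
noncomputable def sphereσ (n : ℕ) : Measure (sphere (0 : EuclideanSpace ℝ (Fin n)) 1) :=
  μH[(n : ℝ) - 1]

/-!
Write `w = ρ(L₁,·) ρ(K₂,·) ⋯ ρ(Kₙ,·)` and `g = ρ(K₁,·) / ρ(L₁,·)` on the sphere. Then
`Ṽ(L₁,K₂,…,Kₙ)`, `Ṽ(K₁,…,Kₙ)` and `Ṽ_φ(L₁,K₁,…,Kₙ)` are `1/n` times the integrals of `w`, `w g`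
and `w φ(g)`, so the inequality is Jensen's inequality for the measure with density `w`, and for
strictly convex `φ` equality forces `g` to be a.e., hence (being continuous) everywhere, constant.

This needs the spherical Hausdorff measure to be finite and to charge every nonempty open set.
Around a unit vector `x` the sphere is the graph of `h ↦ √(1 - ‖h‖²)` over `xᗮ`: this graph map
is smooth, hence Lipschitz, on a closed ball of radius `1/2`, which gives local finiteness;
conversely the orthogonal projection onto `xᗮ` is `1`-Lipschitz and maps every open subset of
the sphere onto a set with nonempty interior, which gives positivity on open sets.
-/

open Module Submodule
open scoped RealInnerProductSpace

noncomputable def hemisphereGraph {E : Type*} [NormedAddCommGroup E] [InnerProductSpace ℝ E]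
    (x : E) (v : (ℝ ∙ x)ᗮ) : E :=
  (v : E) + √(1 - ‖v‖ ^ 2) • x

section Hemisphere

variable {E : Type*} [NormedAddCommGroup E] [InnerProductSpace ℝ E] {x : E}

lemma norm_hemisphereGraph (hx : ‖x‖ = 1) {v : (ℝ ∙ x)ᗮ} (hv : ‖v‖ ≤ 1) :
    ‖hemisphereGraph x v‖ = 1 := by
  have horth : ⟪(v : E), √(1 - ‖v‖ ^ 2) • x⟫ = 0 := by
    rw [inner_smul_right, mem_orthogonal_singleton_iff_inner_left.mp v.2, mul_zero]
  have hsq := norm_add_sq_eq_norm_sq_add_norm_sq_real horth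
  rw [norm_smul, hx, mul_one, norm_of_nonneg (sqrt_nonneg _),
    mul_self_sqrt (by nlinarith [norm_nonneg v]), norm_coe] at hsq
  rw [hemisphereGraph]
  nlinarith [norm_nonneg ((v : E) + √(1 - ‖v‖ ^ 2) • x)]

lemma orthogonalProjectionOnto_hemisphereGraph (v : (ℝ ∙ x)ᗮ) :
    (ℝ ∙ x)ᗮ.orthogonalProjectionOnto (hemisphereGraph x v) = v := by
  simp [hemisphereGraph, orthogonalProjectionOnto_mem_subspace_eq_self,
    orthogonalProjectionOnto_orthogonalComplement_singleton_eq_zero]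

lemma hemisphereGraph_orthogonalProjectionOnto (hx : ‖x‖ = 1) {y : E} (hy : ‖y‖ = 1)
    (hxy : 0 ≤ ⟪x, y⟫) : hemisphereGraph x ((ℝ ∙ x)ᗮ.orthogonalProjectionOnto y) = y := by
  have hsum := (ℝ ∙ x).starProjection_add_starProjection_orthogonal y
  have hpyth := norm_sq_eq_add_norm_sq_starProjection y (ℝ ∙ x)
  rw [starProjection_unit_singleton ℝ hx, starProjection_apply] at hsum hpyth
  rw [hy, norm_smul, hx, mul_one, norm_eq_abs, sq_abs] at hpyth
  have hheight : √(1 - ‖(ℝ ∙ x)ᗮ.orthogonalProjectionOnto y‖ ^ 2) = ⟪x, y⟫ := by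
    rw [norm_coe] at hpyth
    rw [show 1 - ‖(ℝ ∙ x)ᗮ.orthogonalProjectionOnto y‖ ^ 2 = ⟪x, y⟫ ^ 2 by linarith, sqrt_sq hxy]
  rw [hemisphereGraph, hheight, add_comm, hsum]

lemma continuous_hemisphereGraph : Continuous (hemisphereGraph x) := by
  unfold hemisphereGraph; fun_prop

lemma contDiffAt_hemisphereGraph {n : WithTop ℕ∞} {v : (ℝ ∙ x)ᗮ} (hv : ‖v‖ < 1) :
    ContDiffAt ℝ n (hemisphereGraph x) v := by
  have hpos : 1 - ‖v‖ ^ 2 ≠ 0 := by nlinarith [norm_nonneg v]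
  exact ((ℝ ∙ x)ᗮ.subtypeL.contDiff.contDiffAt).add
    (((contDiffAt_const.sub (contDiff_norm_sq ℝ).contDiffAt).sqrt hpos).smul contDiffAt_const)

lemma finrank_orthogonal_span_singleton_eq [FiniteDimensional ℝ E] (hx : x ≠ 0) :
    (finrank ℝ (ℝ ∙ x)ᗮ : ℝ) = finrank ℝ E - 1 := by
  have h := (ℝ ∙ x).finrank_add_finrank_orthogonal
  rw [finrank_span_singleton hx] at h
  rw [← h]; push_cast; ring

end Hemisphere

section SphereMeasure

variable {E : Type*} [NormedAddCommGroup E] [InnerProductSpace ℝ E] [FiniteDimensional ℝ E]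
  [MeasurableSpace E] [BorelSpace E]

lemma hausdorffMeasure_image_hemisphereGraph_lt_top (x : E) :
    μH[(finrank ℝ (ℝ ∙ x)ᗮ : ℝ)] (hemisphereGraph x '' closedBall 0 (1 / 2)) < ⊤ := by
  obtain ⟨K, hK⟩ : ∃ K, LipschitzOnWith K (hemisphereGraph x) (closedBall 0 (1 / 2)) :=
    ContDiffOn.exists_lipschitzOnWith (n := 1)
      (fun v hv => (contDiffAt_hemisphereGraph (by
        rw [mem_closedBall_zero_iff] at hv; linarith)).contDiffWithinAt)
      one_ne_zero (convex_closedBall _ _) (isCompact_closedBall _ _)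
  calc μH[(finrank ℝ (ℝ ∙ x)ᗮ : ℝ)] (hemisphereGraph x '' closedBall 0 (1 / 2))
      ≤ K ^ (finrank ℝ (ℝ ∙ x)ᗮ : ℝ) * μH[(finrank ℝ (ℝ ∙ x)ᗮ : ℝ)] (closedBall 0 (1 / 2)) :=
        hK.hausdorffMeasure_image_le (Nat.cast_nonneg _)
    _ < ⊤ := by
        rw [ENNReal.rpow_natCast]
        exact ENNReal.mul_lt_top (ENNReal.pow_lt_top ENNReal.coe_lt_top)
          (isCompact_closedBall _ _).measure_lt_top

instance isLocallyFiniteMeasure_hausdorffMeasure_sphere :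
    IsLocallyFiniteMeasure (μH[(finrank ℝ E : ℝ) - 1] : Measure (sphere (0 : E) 1)) := by
  refine ⟨fun u => ?_⟩
  set x : E := u.1
  set P := (ℝ ∙ x)ᗮ.orthogonalProjectionOnto
  rw [← finrank_orthogonal_span_singleton_eq (ne_of_mem_sphere u.2 one_ne_zero)]
  let s : Set (sphere (0 : E) 1) := {y | 0 < ⟪x, y⟫} ∩ {y | ‖P y‖ < 1 / 2}
  have hs : s ∈ nhds u := by
    refine IsOpen.mem_nhds ((isOpen_lt (by fun_prop) (by fun_prop)).inter
      (isOpen_lt (by fun_prop) (by fun_prop))) ⟨?_, ?_⟩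
    · simp [x, norm_eq_of_mem_sphere u]
    · change ‖P x‖ < 1 / 2
      rw [orthogonalProjectionOnto_orthogonalComplement_singleton_eq_zero]
      norm_num
  have hsub : Subtype.val '' s ⊆ hemisphereGraph x '' closedBall 0 (1 / 2) := by
    rintro _ ⟨y, ⟨hxy, hPy⟩, rfl⟩
    exact ⟨P y, mem_closedBall_zero_iff.mpr hPy.le, hemisphereGraph_orthogonalProjectionOnto
      (norm_eq_of_mem_sphere u) (norm_eq_of_mem_sphere y) hxy.le⟩
  refine ⟨s, hs, ?_⟩
  rw [← isometry_subtype_coe.hausdorffMeasure_image (Or.inl (Nat.cast_nonneg _)) s]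
  exact (measure_mono hsub).trans_lt (hausdorffMeasure_image_hemisphereGraph_lt_top x)

instance isOpenPosMeasure_hausdorffMeasure_sphere :
    (μH[(finrank ℝ E : ℝ) - 1] : Measure (sphere (0 : E) 1)).IsOpenPosMeasure := by
  refine ⟨fun U hU ⟨u, hu⟩ => ?_⟩
  set x : E := u.1
  have hx : ‖x‖ = 1 := norm_eq_of_mem_sphere u
  set P := (ℝ ∙ x)ᗮ.orthogonalProjectionOnto
  rw [← finrank_orthogonal_span_singleton_eq (ne_of_mem_sphere u.2 one_ne_zero)]
  obtain ⟨O, hO, rfl⟩ := isOpen_induced_iff.mp hU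
  let W : Set (ℝ ∙ x)ᗮ := ball 0 1 ∩ hemisphereGraph x ⁻¹' O
  have hW : IsOpen W := isOpen_ball.inter (hO.preimage continuous_hemisphereGraph)
  have h0W : (0 : (ℝ ∙ x)ᗮ) ∈ W := ⟨mem_ball_self one_pos, by simpa [hemisphereGraph] using hu⟩
  have hWsub : W ⊆ (P ∘ Subtype.val) '' (Subtype.val ⁻¹' O : Set (sphere (0 : E) 1)) := by
    rintro v ⟨hv, hO⟩
    have hmem : hemisphereGraph x v ∈ sphere (0 : E) 1 :=
      mem_sphere_zero_iff_norm.mpr (norm_hemisphereGraph hx (mem_ball_zero_iff.mp hv).le)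
    exact ⟨⟨_, hmem⟩, hO, orthogonalProjectionOnto_hemisphereGraph v⟩
  have hPlip : LipschitzWith 1 (P ∘ Subtype.val : sphere (0 : E) 1 → (ℝ ∙ x)ᗮ) := by
    simpa using (lipschitzWith_orthogonalProjectionOnto _).comp (LipschitzWith.subtype_val _)
  refine pos_iff_ne_zero.mp ?_
  calc 0 < μH[(finrank ℝ (ℝ ∙ x)ᗮ : ℝ)] W := hW.measure_pos _ ⟨0, h0W⟩
    _ ≤ μH[(finrank ℝ (ℝ ∙ x)ᗮ : ℝ)] ((P ∘ Subtype.val) '' (Subtype.val ⁻¹' O)) :=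
        measure_mono hWsub
    _ ≤ _ := by
        simpa using hPlip.hausdorffMeasure_image_le (Nat.cast_nonneg _) (Subtype.val ⁻¹' O)

end SphereMeasure

section WithDensity

variable {X : Type*} [MeasurableSpace X] {μ : Measure X}

lemma withDensity_apply_eq_zero_iff_of_ne_zero {f : X → ENNReal} (hf : AEMeasurable f μ)
    (hf0 : ∀ x, f x ≠ 0) {s : Set X} : μ.withDensity f s = 0 ↔ μ s = 0 := by
  simp [withDensity_apply_eq_zero' hf, hf0]

variable {w : X → ℝ}

lemma integral_withDensity_ofReal (hw : Measurable w) (hw0 : ∀ x, 0 ≤ w x) (f : X → ℝ) :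
    ∫ x, f x ∂μ.withDensity (fun x => ENNReal.ofReal (w x)) = ∫ x, w x * f x ∂μ := by
  rw [integral_withDensity_eq_integral_toReal_smul hw.ennreal_ofReal
    (ae_of_all _ fun _ => ENNReal.ofReal_lt_top)]
  simp [ENNReal.toReal_ofReal (hw0 _)]

lemma average_withDensity_ofReal (hw : Measurable w) (hw0 : ∀ x, 0 ≤ w x) (f : X → ℝ) :
    ⨍ x, f x ∂μ.withDensity (fun x => ENNReal.ofReal (w x)) =
      (∫ x, w x * f x ∂μ) / ∫ x, w x ∂μ := by
  have hmass := integral_withDensity_ofReal (μ := μ) hw hw0 fun _ => 1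
  simp only [integral_const, smul_eq_mul, mul_one] at hmass
  rw [average_eq, integral_withDensity_ofReal hw hw0, hmass, smul_eq_mul, inv_mul_eq_div]

end WithDensity

section CompactJensen

variable {X : Type*} [TopologicalSpace X] [CompactSpace X] {g : X → ℝ}

lemma Continuous.exists_pos_le [Nonempty X] (hg : Continuous g) (hg0 : ∀ x, 0 < g x) :
    ∃ a > 0, ∀ x, a ≤ g x := by
  obtain ⟨x₀, -, hx₀⟩ := isCompact_univ.exists_isMinOn univ_nonempty hg.continuousOn
  exact ⟨g x₀, hg0 x₀, fun x => hx₀ (mem_univ x)⟩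

variable [MeasurableSpace X] [OpensMeasurableSpace X] {μ : Measure X} [IsFiniteMeasure μ]
  {φ : ℝ → ℝ}

lemma Continuous.integrable_of_compactSpace {f : X → ℝ} (hf : Continuous f) : Integrable f μ :=
  hf.integrable_of_hasCompactSupport (.of_compactSpace f)

theorem ConvexOn.map_average_le_of_continuous [NeZero μ] (hφ : ConvexOn ℝ (Ioi 0) φ)
    (hg : Continuous g) (hg0 : ∀ x, 0 < g x) : φ (⨍ x, g x ∂μ) ≤ ⨍ x, φ (g x) ∂μ := by
  have := μ.nonempty_of_neZero
  obtain ⟨a, ha, hga⟩ := hg.exists_pos_le hg0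
  have hsub : Ici a ⊆ Ioi 0 := Ici_subset_Ioi.mpr ha
  have hφc := hφ.continuousOn isOpen_Ioi
  exact (hφ.subset hsub (convex_Ici a)).map_average_le (hφc.mono hsub) isClosed_Ici
    (ae_of_all _ hga) hg.integrable_of_compactSpace
    (hφc.comp_continuous hg hg0).integrable_of_compactSpace

theorem StrictConvexOn.eq_average_of_map_average_eq [μ.IsOpenPosMeasure]
    (hφ : StrictConvexOn ℝ (Ioi 0) φ) (hg : Continuous g) (hg0 : ∀ x, 0 < g x)
    (heq : φ (⨍ x, g x ∂μ) = ⨍ x, φ (g x) ∂μ) (x : X) : g x = ⨍ x, g x ∂μ := by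
  have := Nonempty.intro x
  obtain ⟨a, ha, hga⟩ := hg.exists_pos_le hg0
  have hsub : Ici a ⊆ Ioi 0 := Ici_subset_Ioi.mpr ha
  have hφc := hφ.convexOn.continuousOn isOpen_Ioi
  rcases (hφ.subset hsub (convex_Ici a)).ae_eq_const_or_map_average_lt (hφc.mono hsub)
    isClosed_Ici (ae_of_all _ hga) (hg.integrable_of_compactSpace (μ := μ))
    (hφc.comp_continuous hg hg0).integrable_of_compactSpace with hconst | hlt
  · exact congrFun ((hg.ae_eq_iff_eq μ continuous_const).mp hconst) x
  · exact absurd heq hlt.ne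

lemma Continuous.integral_pos_of_pos [NeZero μ] {f : X → ℝ} (hf : Continuous f)
    (hf0 : ∀ x, 0 < f x) : 0 < ∫ x, f x ∂μ := by
  rw [integral_pos_iff_support_of_nonneg (fun x => (hf0 x).le) hf.integrable_of_compactSpace,
    show Function.support f = univ from eq_univ_of_forall fun x => (hf0 x).ne']
  exact Measure.measure_univ_pos.mpr (NeZero.ne μ)

variable {w : X → ℝ}

theorem ConvexOn.integral_mul_map_div_le (hφ : ConvexOn ℝ (Ioi 0) φ) (hw : Continuous w)
    (hw0 : ∀ x, 0 < w x) (hg : Continuous g) (hg0 : ∀ x, 0 < g x) :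
    (∫ x, w x ∂μ) * φ ((∫ x, w x * g x ∂μ) / ∫ x, w x ∂μ) ≤ ∫ x, w x * φ (g x) ∂μ := by
  rcases eq_zero_or_neZero μ with rfl | _
  · simp
  have hwm : Measurable fun x => ENNReal.ofReal (w x) := hw.measurable.ennreal_ofReal
  let ν := μ.withDensity fun x => ENNReal.ofReal (w x)
  have : IsFiniteMeasure ν := isFiniteMeasure_withDensity_ofReal hw.integrable_of_compactSpace.2
  have : NeZero ν := ⟨fun hν => NeZero.ne μ <| Measure.measure_univ_eq_zero.mp <|
    (withDensity_apply_eq_zero_iff_of_ne_zero hwm.aemeasurable (fun x => by simp [hw0 x])).mp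
      (by change ν univ = 0; rw [hν, Measure.coe_zero, Pi.zero_apply])⟩
  have hJ := hφ.map_average_le_of_continuous (μ := ν) hg hg0
  rw [average_withDensity_ofReal hw.measurable (fun x => (hw0 x).le),
    average_withDensity_ofReal hw.measurable (fun x => (hw0 x).le)] at hJ
  rwa [le_div_iff₀ (hw.integral_pos_of_pos hw0), mul_comm] at hJ

theorem StrictConvexOn.integral_mul_map_div_eq_iff [μ.IsOpenPosMeasure]
    (hφ : StrictConvexOn ℝ (Ioi 0) φ) (hw : Continuous w) (hw0 : ∀ x, 0 < w x)
    (hg : Continuous g) (hg0 : ∀ x, 0 < g x) :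
    (∫ x, w x ∂μ) * φ ((∫ x, w x * g x ∂μ) / ∫ x, w x ∂μ) = ∫ x, w x * φ (g x) ∂μ ↔
      ∃ c, 0 < c ∧ ∀ x, g x = c := by
  constructor
  · intro heq
    rcases isEmpty_or_nonempty X with hX | hX
    · exact ⟨1, one_pos, isEmptyElim⟩
    have hwm : Measurable fun x => ENNReal.ofReal (w x) := hw.measurable.ennreal_ofReal
    let ν := μ.withDensity fun x => ENNReal.ofReal (w x)
    have : IsFiniteMeasure ν := isFiniteMeasure_withDensity_ofReal hw.integrable_of_compactSpace.2
    have : ν.IsOpenPosMeasure := ⟨fun U hU hne => by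
      rw [Ne, withDensity_apply_eq_zero_iff_of_ne_zero hwm.aemeasurable (fun x => by simp [hw0 x])]
      exact hU.measure_ne_zero μ hne⟩
    have hconst := hφ.eq_average_of_map_average_eq (μ := ν) hg hg0 (by
      rw [average_withDensity_ofReal hw.measurable (fun x => (hw0 x).le),
        average_withDensity_ofReal hw.measurable (fun x => (hw0 x).le),
        eq_div_iff (hw.integral_pos_of_pos hw0).ne', mul_comm, heq])
    exact ⟨_, hconst hX.some ▸ hg0 hX.some, hconst⟩
  · rintro ⟨c, -, hc⟩
    simp only [hc, integral_mul_const]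
    rcases eq_or_ne (∫ x, w x ∂μ) 0 with h | h
    · simp [h]
    · rw [mul_div_cancel_left₀ _ h]

end CompactJensen

lemma sphereσ_eq_hausdorffMeasure (n : ℕ) :
    sphereσ n = μH[(finrank ℝ (EuclideanSpace ℝ (Fin n)) : ℝ) - 1] := by
  rw [sphereσ, finrank_euclideanSpace_fin]

instance (n : ℕ) : IsFiniteMeasure (sphereσ n) :=
  sphereσ_eq_hausdorffMeasure n ▸ inferInstance

instance (n : ℕ) : (sphereσ n).IsOpenPosMeasure :=
  sphereσ_eq_hausdorffMeasure n ▸ inferInstance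

theorem orlicz_multiple_dual_mixed_volume_jensen_general
    (n : ℕ) (hn : 0 < n)
    (φ : ℝ → ℝ)
    (hφconv : ConvexOn ℝ (Ioi 0) φ)
    (ρL : sphere (0 : EuclideanSpace ℝ (Fin n)) 1 → ℝ)
    (ρ : ℕ → (sphere (0 : EuclideanSpace ℝ (Fin n)) 1 → ℝ))
    (hLc : Continuous ρL) (hLpos : ∀ u, 0 < ρL u)
    (hc : ∀ i, 1 ≤ i → i ≤ n → Continuous (ρ i))
    (hpos : ∀ i, 1 ≤ i → i ≤ n → ∀ u, 0 < ρ i u)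
    (Vφ VL VK : ℝ)
    (hVφ : Vφ = (1 / n) * ∫ u,
      φ (ρ 1 u / ρL u) * (ρL u * ∏ j ∈ Finset.Icc 2 n, ρ j u) ∂(sphereσ n))
    (hVL : VL = (1 / n) * ∫ u, ρL u * ∏ j ∈ Finset.Icc 2 n, ρ j u ∂(sphereσ n))
    (hVK : VK = (1 / n) * ∫ u, ∏ j ∈ Finset.Icc 1 n, ρ j u ∂(sphereσ n)) :
    Vφ ≥ VL * φ (VK / VL) ∧
      (StrictConvexOn ℝ (Ioi 0) φ →
        (Vφ = VL * φ (VK / VL) ↔ ∃ c : ℝ, 0 < c ∧ ∀ u, ρ 1 u = c * ρL u)) := by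
  set w := fun u => ρL u * ∏ j ∈ Icc 2 n, ρ j u
  set g := fun u => ρ 1 u / ρL u
  have hw : Continuous w := hLc.mul <| continuous_finsetProd _ fun j hj =>
    hc j (one_le_two.trans (mem_Icc.mp hj).1) (mem_Icc.mp hj).2
  have hw0 : ∀ u, 0 < w u := fun u => mul_pos (hLpos u) <| prod_pos fun j hj =>
    hpos j (one_le_two.trans (mem_Icc.mp hj).1) (mem_Icc.mp hj).2 u
  have hg : Continuous g := (hc 1 le_rfl hn).div hLc fun u => (hLpos u).ne'
  have hg0 : ∀ u, 0 < g u := fun u => div_pos (hpos 1 le_rfl hn u) (hLpos u)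
  have hprod : ∀ u, ∏ j ∈ Icc 1 n, ρ j u = w u * g u := fun u => by
    rw [← Finset.insert_Icc_add_one_left_eq_Icc hn, prod_insert (by simp)]
    change ρ 1 u * ∏ j ∈ Icc 2 n, ρ j u = ρL u * (∏ j ∈ Icc 2 n, ρ j u) * (ρ 1 u / ρL u)
    field_simp [(hLpos u).ne']
  have hn0 : (0 : ℝ) < 1 / n := by positivity
  have hVφ' : Vφ = 1 / n * ∫ u, w u * φ (g u) ∂sphereσ n := by
    simp only [hVφ, w, g, mul_comm]
  have hRHS : VL * φ (VK / VL) =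
      1 / n * ((∫ u, w u ∂sphereσ n) * φ ((∫ u, w u * g u ∂sphereσ n) / ∫ u, w u ∂sphereσ n)) := by
    simp only [hVK, hVL, hprod, mul_div_mul_left _ _ hn0.ne', mul_assoc]
  rw [hRHS, hVφ', ge_iff_le]
  refine ⟨mul_le_mul_of_nonneg_left (hφconv.integral_mul_map_div_le hw hw0 hg hg0) hn0.le,
    fun hstrict => ?_⟩
  rw [mul_right_inj' hn0.ne', eq_comm, hstrict.integral_mul_map_div_eq_iff hw hw0 hg hg0]
  simp only [g, div_eq_iff (hLpos _).ne']

/-- Jensen-type inequality for the Orlicz multiple dual mixed volume: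
`Ṽ_φ(L₁,K₁,...,Kₙ) ≥ Ṽ(L₁,K₂,...,Kₙ)·φ(Ṽ(K₁,...,Kₙ)/Ṽ(L₁,K₂,...,Kₙ))`;
if `φ` is strictly convex, equality holds iff `K₁` and `L₁` are dilates.
The star bodies `K₁,...,Kₙ` have radial functions `ρ 1, ..., ρ n`. -/
theorem orlicz_multiple_dual_mixed_volume_jensen
    (n : ℕ) (hn : 0 < n)
    (φ : ℝ → ℝ)
    (hφconv : ConvexOn ℝ (Ioi 0) φ)
    (hφanti : StrictAntiOn φ (Ioi 0))
    (hφpos : ∀ t ∈ Ioi (0 : ℝ), 0 < φ t)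
    (ρL : sphere (0 : EuclideanSpace ℝ (Fin n)) 1 → ℝ)
    (ρ : ℕ → (sphere (0 : EuclideanSpace ℝ (Fin n)) 1 → ℝ))
    (hLc : Continuous ρL) (hLpos : ∀ u, 0 < ρL u)
    (hc : ∀ i, 1 ≤ i → i ≤ n → Continuous (ρ i))
    (hpos : ∀ i, 1 ≤ i → i ≤ n → ∀ u, 0 < ρ i u)
    (Vφ VL VK : ℝ)
    (hVφ : Vφ = (1 / n) * ∫ u,
      φ (ρ 1 u / ρL u) * (ρL u * ∏ j ∈ Finset.Icc 2 n, ρ j u) ∂(sphereσ n))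
    (hVL : VL = (1 / n) * ∫ u, ρL u * ∏ j ∈ Finset.Icc 2 n, ρ j u ∂(sphereσ n))
    (hVK : VK = (1 / n) * ∫ u, ∏ j ∈ Finset.Icc 1 n, ρ j u ∂(sphereσ n)) :
    Vφ ≥ VL * φ (VK / VL) ∧
      (StrictConvexOn ℝ (Ioi 0) φ →
        (Vφ = VL * φ (VK / VL) ↔ ∃ c : ℝ, 0 < c ∧ ∀ u, ρ 1 u = c * ρL u)) :=
  orlicz_multiple_dual_mixed_volume_jensen_general n hn φ hφconv ρL ρ hLc hLpos hc hpos Vφ VL VK hVφ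
    hVL hVK
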